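/- arXiv:2004.05348 — 4 statements merged into one kernel-verified Lean document; each statement's English description precedes it below -/
import Mathlib

section
/- Let J = α·Σ_{i=−(L−1)}^{L−1} w_i vec(A_i) vec(A_i)^H + (1−α)·Σ_{i=−(L−1)}^{L−1} w̃_i vec(B_i) vec(B_i)^H with real α, w_i, w̃_i. Then for every k with −(L−1) ≤ k ≤ L−1, J·vec(A_k) = α·w_k·(2L − 2|k|)·vec(A_k); that is, vec(A_k) is an eigenvector of J with eigenvalue λ_A(k) = α·w_k·(2L − 2|k|). -/
open scoped BigOperators
open Matrix

/-- The `L × L` shift (Toeplitz) matrix `U_k` with `(U_k)_{i,j} = 1` if `j - i = k`. -/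
def shiftU (L : ℕ) (k : ℤ) : Matrix (Fin L) (Fin L) ℂ :=
  Matrix.of fun i j => if (j : ℤ) - (i : ℤ) = k then 1 else 0

/-- The `2L × 2L` block-diagonal matrix `A_k = diag(U_k, U_k)`. -/
def AMat (L : ℕ) (k : ℤ) : Matrix (Fin L ⊕ Fin L) (Fin L ⊕ Fin L) ℂ :=
  Matrix.fromBlocks (shiftU L k) 0 0 (shiftU L k)

/-- The `2L × 2L` block matrix `B_k = [[0, U_k], [0, 0]]`. -/
def BMat (L : ℕ) (k : ℤ) : Matrix (Fin L ⊕ Fin L) (Fin L ⊕ Fin L) ℂ :=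
  Matrix.fromBlocks 0 (shiftU L k) 0 0

/-- Vectorization of a square matrix. -/
def vecM {n : Type*} (M : Matrix n n ℂ) : n × n → ℂ := fun p => M p.1 p.2

/-- `J = α Σ_i w_i vec(A_i) vec(A_i)^H + (1-α) Σ_i w̃_i vec(B_i) vec(B_i)^H`. -/
noncomputable def JMat (L : ℕ) (α : ℝ) (w wt : ℤ → ℝ) :
    Matrix ((Fin L ⊕ Fin L) × (Fin L ⊕ Fin L)) ((Fin L ⊕ Fin L) × (Fin L ⊕ Fin L)) ℂ :=
  (α : ℂ) • ∑ k ∈ Finset.Icc (-(L : ℤ) + 1) ((L : ℤ) - 1),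
      (w k : ℂ) • Matrix.vecMulVec (vecM (AMat L k)) (star (vecM (AMat L k)))
  + ((1 - α : ℝ) : ℂ) • ∑ k ∈ Finset.Icc (-(L : ℤ) + 1) ((L : ℤ) - 1),
      (wt k : ℂ) • Matrix.vecMulVec (vecM (BMat L k)) (star (vecM (BMat L k)))

/-! The vectors `vec(A_i)` are pairwise orthogonal, and orthogonal to every `vec(B_j)` because
their supports are disjoint. Hence `J vec(A_k)` keeps only the term `α w_k ‖vec(A_k)‖² vec(A_k)`,
and `‖vec(A_k)‖² = 2(L - |k|)` counts the ones in the two diagonal copies of `U_k`. -/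

open Finset

lemma Matrix.sum_smul_vecMulVec_star_mulVec {ι n R : Type*} [Fintype n] [CommSemiring R] [Star R]
    (s : Finset ι) (c : ι → R) (u : ι → n → R) (x : n → R) :
    (∑ i ∈ s, c i • vecMulVec (u i) (star (u i))) *ᵥ x
      = ∑ i ∈ s, (c i * (star (u i) ⬝ᵥ x)) • u i := by
  simp only [sum_mulVec, smul_mulVec, vecMulVec_mulVec, op_smul_eq_smul, smul_smul]

@[simp]
lemma vecM_zero {n : Type*} : vecM (0 : Matrix n n ℂ) = 0 := rfl

lemma star_vecM_dotProduct_vecM {n : Type*} [Fintype n] (M N : Matrix n n ℂ) :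
    star (vecM M) ⬝ᵥ vecM N = ∑ i, ∑ j, star (M i j) * N i j := by
  simp only [dotProduct, vecM, Pi.star_apply, Fintype.sum_prod_type]

lemma star_vecM_fromBlocks_dotProduct {n : Type*} [Fintype n]
    (A B C D A' B' C' D' : Matrix n n ℂ) :
    star (vecM (fromBlocks A B C D)) ⬝ᵥ vecM (fromBlocks A' B' C' D')
      = star (vecM A) ⬝ᵥ vecM A' + star (vecM B) ⬝ᵥ vecM B'
        + star (vecM C) ⬝ᵥ vecM C' + star (vecM D) ⬝ᵥ vecM D' := by
  simp only [star_vecM_dotProduct_vecM, Fintype.sum_sum_type, fromBlocks_apply₁₁,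
    fromBlocks_apply₁₂, fromBlocks_apply₂₁, fromBlocks_apply₂₂, sum_add_distrib]
  ring

lemma card_filter_sub_eq (L : ℕ) (k : ℤ) :
    #{p : Fin L × Fin L | (p.2 : ℤ) - p.1 = k} = L - k.natAbs := by
  have : #{p : Fin L × Fin L | (p.2 : ℤ) - p.1 = k}
      = #(Ico (max 0 (-k)) (min L (L - k))) := by
    refine card_bij (fun p _ => (p.1 : ℤ)) ?_ ?_ ?_
    · intro p hp
      simp only [mem_filter, mem_univ, true_and] at hp
      simp only [mem_Ico]
      omega
    · intro p hp q hq h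
      simp only [mem_filter, mem_univ, true_and] at hp hq
      ext <;> simp at h <;> omega
    · intro a ha
      simp only [mem_Ico] at ha
      refine ⟨(⟨a.toNat, by omega⟩, ⟨(a + k).toNat, by omega⟩), ?_, ?_⟩ <;> simp <;> omega
  rw [this, Int.card_Ico]
  omega

lemma star_vecM_shiftU_dotProduct (L : ℕ) (i k : ℤ) :
    star (vecM (shiftU L i)) ⬝ᵥ vecM (shiftU L k)
      = if i = k then ((L - k.natAbs : ℕ) : ℂ) else 0 := by
  rw [star_vecM_dotProduct_vecM, ← card_filter_sub_eq L k, card_filter, Fintype.sum_prod_type]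
  push_cast
  split_ifs with h
  · refine sum_congr rfl fun a _ => sum_congr rfl fun b _ => ?_
    simp only [shiftU, of_apply]
    split_ifs <;> simp_all
  · refine sum_eq_zero fun a _ => sum_eq_zero fun b _ => ?_
    simp only [shiftU, of_apply]
    split_ifs <;> simp_all

lemma star_vecM_AMat_dotProduct (L : ℕ) (i k : ℤ) :
    star (vecM (AMat L i)) ⬝ᵥ vecM (AMat L k)
      = if i = k then 2 * ((L - k.natAbs : ℕ) : ℂ) else 0 := by
  simp only [AMat, star_vecM_fromBlocks_dotProduct, star_vecM_shiftU_dotProduct]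
  split_ifs <;> simp [two_mul]

lemma star_vecM_BMat_dotProduct_AMat (L : ℕ) (i k : ℤ) :
    star (vecM (BMat L i)) ⬝ᵥ vecM (AMat L k) = 0 := by
  simp [BMat, AMat, star_vecM_fromBlocks_dotProduct]

/-- For every `-(L-1) ≤ k ≤ L-1`, `J vec(A_k) = α w_k (2L - 2|k|) vec(A_k)`; i.e.
`vec(A_k)` is an eigenvector of `J` with eigenvalue `λ_A(k) = α w_k (2L - 2|k|)`. -/
theorem stmt5 (L : ℕ) (α : ℝ) (w wt : ℤ → ℝ) (k : ℤ) (hk : |k| ≤ (L : ℤ) - 1) :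
    JMat L α w wt *ᵥ vecM (AMat L k)
      = ((α * w k * (2 * (L : ℝ) - 2 * (k.natAbs : ℝ)) : ℝ) : ℂ) • vecM (AMat L k) := by
  obtain ⟨hk_lower, hk_upper⟩ := abs_le.mp hk
  have hk_mem : k ∈ Icc (-(L : ℤ) + 1) ((L : ℤ) - 1) := mem_Icc.mpr ⟨by omega, hk_upper⟩
  have hk_le : k.natAbs ≤ L := by omega
  simp only [JMat, add_mulVec, smul_mulVec, sum_smul_vecMulVec_star_mulVec,
    star_vecM_AMat_dotProduct, star_vecM_BMat_dotProduct_AMat, mul_zero, zero_smul, sum_const_zero,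
    smul_zero, add_zero, mul_ite, ite_smul, sum_ite_eq', if_pos hk_mem, smul_smul]
  push_cast [Nat.cast_sub hk_le]
  congr 1
  ring
end

section
/- (Prouhet's theorem for the PTM sequence) Let (a_n) be the Prouhet–Thue–Morse sequence and let M ≥ 0 and N = 2^{M+1}. Then for every integer m with 0 ≤ m ≤ M, Σ_{n=0}^{N−1} (−1)^{a_n}·n^m = 0; equivalently, Σ_{n=0}^{N−1} (1 − a_n)·n^m = Σ_{n=0}^{N−1} a_n·n^m. -/
/-!
Write `ε n = (-1)^(a n)`, so that `ε (2k) = ε k` and `ε (2k+1) = -ε k`. Pairing `2k` with `2k+1`,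
`∑_{n<2N} ε n n^m = ∑_{k<N} ε k ((2k)^m - (2k+1)^m)`, and by the binomial theorem the bracket is a
polynomial in `k` of degree `< m`. Hence the moments of order `< M` of `ε` over `[0, 2^M)` vanish
by induction on `M`.
-/

open Finset

theorem sum_range_two_mul {β : Type*} [AddCommMonoid β] (f : ℕ → β) (N : ℕ) :
    ∑ n ∈ range (2 * N), f n = ∑ k ∈ range N, (f (2 * k) + f (2 * k + 1)) := by
  induction N with
  | zero => simp
  | succ N ih =>
    rw [Nat.mul_succ, sum_range_succ, sum_range_succ, ih, sum_range_succ, add_assoc]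

section SignMoments

variable {R : Type*} [CommRing R] {ε : ℕ → R}

theorem sum_range_two_mul_mul_pow (hε_even : ∀ k, ε (2 * k) = ε k)
    (hε_odd : ∀ k, ε (2 * k + 1) = -ε k) (N m : ℕ) :
    ∑ n ∈ range (2 * N), ε n * (n : R) ^ m
      = -∑ j ∈ range m, (m.choose j * 2 ^ j : R) * ∑ k ∈ range N, ε k * (k : R) ^ j := by
  have hbinom : ∀ k : ℕ, ((2 * k + 1 : ℕ) : R) ^ m
      = ((2 * k : ℕ) : R) ^ m + ∑ j ∈ range m, (m.choose j * 2 ^ j : R) * (k : R) ^ j := by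
    intro k
    push_cast
    rw [add_pow, sum_range_succ, Nat.choose_self, add_comm]
    simp only [one_pow, mul_one, Nat.cast_one, mul_pow]
    exact congrArg _ (sum_congr rfl fun j _ => by ring)
  have hpair : ∀ k : ℕ,
      ε (2 * k) * ((2 * k : ℕ) : R) ^ m + ε (2 * k + 1) * ((2 * k + 1 : ℕ) : R) ^ m
        = -∑ j ∈ range m, ε k * ((m.choose j * 2 ^ j : R) * (k : R) ^ j) := by
    intro k
    rw [hε_even, hε_odd, hbinom, ← mul_sum]
    ring
  simp_rw [sum_range_two_mul, hpair, ← sum_neg_distrib, mul_sum]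
  rw [sum_comm]
  refine sum_congr rfl fun j _ => ?_
  rw [← sum_neg_distrib]
  exact sum_congr rfl fun k _ => by ring

theorem sum_range_two_pow_mul_pow_eq_zero (hε_even : ∀ k, ε (2 * k) = ε k)
    (hε_odd : ∀ k, ε (2 * k + 1) = -ε k) (M : ℕ) :
    ∀ m < M, ∑ n ∈ range (2 ^ M), ε n * (n : R) ^ m = 0 := by
  induction M with
  | zero => simp
  | succ M ih =>
    intro m hm
    rw [pow_succ', sum_range_two_mul_mul_pow hε_even hε_odd, neg_eq_zero]
    exact sum_eq_zero fun j hj => by rw [ih j (by grind), mul_zero]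

end SignMoments

section ThueMorse

variable {a : ℕ → ℕ} (ha0 : a 0 = 0) (hae : ∀ k, a (2 * k) = a k)
  (hao : ∀ k, a (2 * k + 1) = 1 - a k)
include ha0 hae hao

theorem thueMorse_le_one (n : ℕ) : a n ≤ 1 := by
  induction n using Nat.strong_induction_on with
  | _ n ih =>
    obtain ⟨k, rfl | rfl⟩ := Nat.even_or_odd' n
    · rcases k.eq_zero_or_pos with rfl | hk
      · simp [ha0]
      · rw [hae]; exact ih k (by omega)
    · rw [hao]; omega

theorem neg_one_pow_thueMorse (n : ℕ) : (-1 : ℤ) ^ a n = 1 - 2 * a n := by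
  rcases Nat.le_one_iff_eq_zero_or_eq_one.mp (thueMorse_le_one ha0 hae hao n) with h | h <;>
    simp [h]

theorem neg_one_pow_thueMorse_odd (k : ℕ) : (-1 : ℤ) ^ a (2 * k + 1) = -(-1 : ℤ) ^ a k := by
  rw [neg_one_pow_thueMorse ha0 hae hao, neg_one_pow_thueMorse ha0 hae hao, hao,
    Nat.cast_sub (thueMorse_le_one ha0 hae hao k)]
  ring

end ThueMorse

/-- (Prouhet's theorem for the PTM sequence) If `(a_n)` is the Prouhet–Thue–Morse
sequence (`a_0 = 0`, `a_{2k} = a_k`, `a_{2k+1} = 1 - a_k`) and `N = 2^{M+1}`, then for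
every `0 ≤ m ≤ M`, `Σ_{n=0}^{N-1} (-1)^{a_n} n^m = 0`; equivalently
`Σ_{n=0}^{N-1} (1 - a_n) n^m = Σ_{n=0}^{N-1} a_n n^m`. -/
theorem stmt14 (M : ℕ) (a : ℕ → ℕ) (ha0 : a 0 = 0)
    (hae : ∀ k, a (2 * k) = a k) (hao : ∀ k, a (2 * k + 1) = 1 - a k) :
    ∀ m ≤ M,
      (∑ n ∈ Finset.range (2 ^ (M + 1)), (-1 : ℤ) ^ (a n) * (n : ℤ) ^ m = 0) ∧
      (∑ n ∈ Finset.range (2 ^ (M + 1)), (1 - (a n : ℤ)) * (n : ℤ) ^ m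
        = ∑ n ∈ Finset.range (2 ^ (M + 1)), (a n : ℤ) * (n : ℤ) ^ m) := by
  intro m hm
  have hmoment : ∑ n ∈ range (2 ^ (M + 1)), (-1 : ℤ) ^ a n * (n : ℤ) ^ m = 0 :=
    sum_range_two_pow_mul_pow_eq_zero (fun k => by rw [hae])
      (neg_one_pow_thueMorse_odd ha0 hae hao) _ m (Nat.lt_succ_of_le hm)
  refine ⟨hmoment, ?_⟩
  rw [← sub_eq_zero, ← sum_sub_distrib, ← hmoment]
  exact sum_congr rfl fun n _ => by rw [neg_one_pow_thueMorse ha0 hae hao]; ring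
end

section
/- (Pointwise form of equation (47), Section IV) Let (a_n) be the Prouhet–Thue–Morse sequence, M ≥ 0, N = 2^{M+1}, and β_m = Σ_{n=0}^{N−1} a_n·n^m. Then for every integer m with 0 ≤ m ≤ M and all complex numbers X, Y: Σ_{n=0}^{N−1} n^m·| (1 − a_n)·X + a_n·Y |² = β_m·( |X|² + |Y|² ). -/
open scoped BigOperators

lemma ptm_le_one (a : ℕ → ℕ) (ha0 : a 0 = 0)
    (hae : ∀ k, a (2 * k) = a k) (hao : ∀ k, a (2 * k + 1) = 1 - a k) :
    ∀ n, a n ≤ 1 := by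
  intro n
  induction n using Nat.strong_induction_on with
  | _ n ih =>
    rcases Nat.even_or_odd n with ⟨k, hk⟩ | ⟨k, hk⟩
    · subst hk
      rcases Nat.eq_zero_or_pos k with h | h
      · simp [h, ha0]
      · rw [show k + k = 2 * k by ring, hae]
        exact ih k (by omega)
    · subst hk
      rw [hao]
      omega

lemma ptm_pte (a : ℕ → ℕ) (ha0 : a 0 = 0)
    (hae : ∀ k, a (2 * k) = a k) (hao : ∀ k, a (2 * k + 1) = 1 - a k) :
    ∀ M : ℕ, ∀ m ≤ M,
      ∑ n ∈ Finset.range (2 ^ (M + 1)), (1 - 2 * (a n : ℤ)) * (n : ℤ) ^ m = 0 := by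
  have ha1 := ptm_le_one a ha0 hae hao
  intro M
  induction M with
  | zero =>
    intro m hm
    interval_cases m
    have h1 : a 1 = 1 := by have := hao 0; simpa [ha0] using this
    simp [Finset.sum_range_succ, ha0, h1]
  | succ M ih =>
    intro m hm
    have hsplit : ∀ (f : ℕ → ℤ) (N : ℕ),
        ∑ n ∈ Finset.range (2 * N), f n
          = ∑ k ∈ Finset.range N, (f (2 * k) + f (2 * k + 1)) := by
      intro f N
      induction N with
      | zero => simp
      | succ N ihN =>
        rw [Finset.sum_range_succ, ← ihN, show 2 * (N + 1) = 2 * N + 1 + 1 by ring,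
          Finset.sum_range_succ, Finset.sum_range_succ]
        ring
    rw [show 2 ^ (M + 1 + 1) = 2 * 2 ^ (M + 1) by ring, hsplit]
    have key : ∀ k : ℕ, (1 - 2 * (a (2 * k) : ℤ)) * ((2 * k : ℕ) : ℤ) ^ m
        + (1 - 2 * (a (2 * k + 1) : ℤ)) * ((2 * k + 1 : ℕ) : ℤ) ^ m
        = (1 - 2 * (a k : ℤ)) * ((2 * (k : ℤ)) ^ m - (2 * (k : ℤ) + 1) ^ m) := by
      intro k
      have h1 : (a (2 * k + 1) : ℤ) = 1 - (a k : ℤ) := by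
        rw [hao]
        rw [Nat.cast_sub (ha1 k)]
        norm_num
      rw [hae, h1]
      push_cast
      ring
    simp_rw [key]
    have hexp : ∀ k : ℕ, (2 * (k : ℤ)) ^ m - (2 * (k : ℤ) + 1) ^ m
        = - ∑ j ∈ Finset.range m, (m.choose j : ℤ) * 2 ^ j * (k : ℤ) ^ j := by
      intro k
      rw [add_pow]
      rw [Finset.sum_range_succ]
      simp only [Nat.choose_self, Nat.cast_one, one_pow, Nat.sub_self, pow_zero, mul_one]
      have hc : ∀ j ∈ Finset.range m,
          (2 * (k : ℤ)) ^ j * (m.choose j : ℤ)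
            = (m.choose j : ℤ) * 2 ^ j * (k : ℤ) ^ j := by
        intro j _
        rw [mul_pow]
        ring
      rw [Finset.sum_congr rfl hc]
      ring
    calc ∑ k ∈ Finset.range (2 ^ (M + 1)),
          (1 - 2 * (a k : ℤ)) * ((2 * (k : ℤ)) ^ m - (2 * (k : ℤ) + 1) ^ m)
        = ∑ k ∈ Finset.range (2 ^ (M + 1)), ∑ j ∈ Finset.range m,
            -((m.choose j : ℤ) * 2 ^ j * ((1 - 2 * (a k : ℤ)) * (k : ℤ) ^ j)) := by
          refine Finset.sum_congr rfl fun k _ => ?_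
          rw [hexp, mul_neg, Finset.mul_sum, ← Finset.sum_neg_distrib]
          refine Finset.sum_congr rfl fun j _ => ?_
          ring
      _ = ∑ j ∈ Finset.range m,
            -((m.choose j : ℤ) * 2 ^ j
              * ∑ k ∈ Finset.range (2 ^ (M + 1)), (1 - 2 * (a k : ℤ)) * (k : ℤ) ^ j) := by
          rw [Finset.sum_comm]
          refine Finset.sum_congr rfl fun j _ => ?_
          rw [Finset.mul_sum, ← Finset.sum_neg_distrib]
      _ = 0 := by
          apply Finset.sum_eq_zero
          intro j hj
          have hj' := Finset.mem_range.mp hj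
          rw [ih j (by omega)]
          ring

/-- (Pointwise form of equation (47), Section IV) For the PTM sequence `(a_n)`,
`N = 2^{M+1}`, and `β_m = Σ_{n<N} a_n n^m`: for every `0 ≤ m ≤ M` and all `X, Y ∈ ℂ`,
`Σ_{n<N} n^m |(1 - a_n) X + a_n Y|² = β_m (|X|² + |Y|²)`. -/
theorem stmt15 (M : ℕ) (a : ℕ → ℕ) (ha0 : a 0 = 0)
    (hae : ∀ k, a (2 * k) = a k) (hao : ∀ k, a (2 * k + 1) = 1 - a k)
    (X Y : ℂ) :
    ∀ m ≤ M,
      ∑ n ∈ Finset.range (2 ^ (M + 1)),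
          (n : ℝ) ^ m * ‖(1 - (a n : ℂ)) * X + (a n : ℂ) * Y‖ ^ 2
        = ((∑ n ∈ Finset.range (2 ^ (M + 1)), a n * n ^ m : ℕ) : ℝ)
            * (‖X‖ ^ 2 + ‖Y‖ ^ 2) := by
  intro m hm
  have ha1 := ptm_le_one a ha0 hae hao
  have hpte := ptm_pte a ha0 hae hao M m hm
  -- cast PTE to ℝ
  have hpteR : ∑ n ∈ Finset.range (2 ^ (M + 1)), (1 - 2 * (a n : ℝ)) * (n : ℝ) ^ m = 0 := by
    have := congrArg (fun z : ℤ => (z : ℝ)) hpte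
    push_cast at this
    simpa using this
  -- per-term rewrite
  have hterm : ∀ n : ℕ, (n : ℝ) ^ m * ‖(1 - (a n : ℂ)) * X + (a n : ℂ) * Y‖ ^ 2
      = (n : ℝ) ^ m * ((1 - (a n : ℝ)) * ‖X‖ ^ 2 + (a n : ℝ) * ‖Y‖ ^ 2) := by
    intro n
    have hb := ha1 n
    interval_cases h : a n
    · simp
    · simp
  rw [Finset.sum_congr rfl fun n _ => hterm n]
  push_cast
  have expand : ∑ n ∈ Finset.range (2 ^ (M + 1)),
      (n : ℝ) ^ m * ((1 - (a n : ℝ)) * ‖X‖ ^ 2 + (a n : ℝ) * ‖Y‖ ^ 2)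
      = (∑ n ∈ Finset.range (2 ^ (M + 1)), (1 - (a n : ℝ)) * (n : ℝ) ^ m) * ‖X‖ ^ 2
        + (∑ n ∈ Finset.range (2 ^ (M + 1)), (a n : ℝ) * (n : ℝ) ^ m) * ‖Y‖ ^ 2 := by
    rw [Finset.sum_mul, Finset.sum_mul, ← Finset.sum_add_distrib]
    refine Finset.sum_congr rfl fun n _ => ?_
    ring
  rw [expand]
  have hhalf : ∑ n ∈ Finset.range (2 ^ (M + 1)), (1 - (a n : ℝ)) * (n : ℝ) ^ m
      = ∑ n ∈ Finset.range (2 ^ (M + 1)), (a n : ℝ) * (n : ℝ) ^ m := by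
    have : ∑ n ∈ Finset.range (2 ^ (M + 1)),
        ((1 - (a n : ℝ)) * (n : ℝ) ^ m - (a n : ℝ) * (n : ℝ) ^ m) = 0 := by
      rw [← hpteR]
      refine Finset.sum_congr rfl fun n _ => ?_
      ring
    rw [Finset.sum_sub_distrib] at this
    linarith
  rw [hhalf]
  ring
end

section
/- (Vanishing of the cross-channel Taylor coefficients B_m, equations (56)–(58)) Let (a_n) be the Prouhet–Thue–Morse sequence, M ≥ 0, N = 2^{M+1}. For complex numbers X, Y define, for each n ∈ {0,…,N−1}: if n is even, S_{V,n} = (1−a_n)·X + a_n·(−conj(Y)) and S_{H,n} = (1−a_n)·Y + a_n·conj(X); if n is odd, S_{V,n} = a_n·(−conj(Y)) + (1−a_n)·(−X) and S_{H,n} = a_n·conj(X) + (1−a_n)·(−Y). Then for every 0 ≤ m ≤ M, Σ_{n=0}^{N−1} n^m·S_{V,n}·conj(S_{H,n}) = ( Σ_{n=0}^{N−1} (−1)^{a_n}·n^m )·X·conj(Y) = 0. -/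
/-!
Each cross term collapses to `S_{V,n} conj(S_{H,n}) = (-1)^{a_n} X conj(Y)`, so everything rests
on Prouhet's theorem: `∑_{n < 2^k} (-1)^{a_n} p(n) = 0` for every polynomial `p` of degree `< k`.
Since the signs on `[2^k, 2^{k+1})` are those on `[0, 2^k)` negated, the sum over `2^{k+1}`
terms is the sum over `2^k` terms of `p - p(· + 2^k)`, a polynomial of strictly smaller degree.
-/

open Finset Polynomial

theorem Polynomial.degree_sub_taylor_lt {R : Type*} [CommRing R] {p : R[X]} (hp : p ≠ 0) (r : R) :
    (p - taylor r p).degree < p.degree :=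
  degree_sub_lt_left (degree_taylor p r).symm hp (leadingCoeff_taylor r p).symm

theorem sum_range_two_pow_mul_eval_eq_zero {R : Type*} [CommRing R] (s : ℕ → R)
    (hs : ∀ k, ∀ n < 2 ^ k, s (n + 2 ^ k) = -s n) {k : ℕ} {p : R[X]} (hp : p.degree < k) :
    ∑ n ∈ range (2 ^ k), s n * p.eval (n : R) = 0 := by
  induction k generalizing p with
  | zero =>
    obtain rfl : p = 0 := by simpa [zero_le_degree_iff] using hp
    simp
  | succ k ih =>
    rcases eq_or_ne p 0 with rfl | hp0
    · simp
    have hdeg : (p - taylor ((2 : R) ^ k) p).degree < k :=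
      (p.degree_sub_taylor_lt hp0 _).trans_le <| degree_le_of_natDegree_le <|
        Nat.lt_succ_iff.mp <| (natDegree_lt_iff_degree_lt hp0).mpr hp
    calc ∑ n ∈ range (2 ^ (k + 1)), s n * p.eval (n : R)
        = ∑ n ∈ range (2 ^ k),
            (s n * p.eval (n : R) + s (n + 2 ^ k) * p.eval ((n + 2 ^ k : ℕ) : R)) := by
          rw [pow_succ, mul_two, sum_range_add, sum_add_distrib]
          simp only [add_comm (2 ^ k)]
      _ = ∑ n ∈ range (2 ^ k), s n * (p - taylor ((2 : R) ^ k) p).eval (n : R) := by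
          refine sum_congr rfl fun n hn => ?_
          rw [hs k n (mem_range.mp hn), eval_sub, taylor_eval]
          push_cast
          ring
      _ = 0 := ih hdeg

section ThueMorse

variable {a : ℕ → ℕ}

theorem thueMorse_le_one_s17 (ha0 : a 0 = 0) (hae : ∀ k, a (2 * k) = a k)
    (hao : ∀ k, a (2 * k + 1) = 1 - a k) (n : ℕ) : a n ≤ 1 := by
  induction n using Nat.strong_induction_on with
  | _ n ih =>
    obtain ⟨k, rfl | rfl⟩ := Nat.even_or_odd' n
    · rcases k with _ | k
      · simp [ha0]
      · rw [hae]
        exact ih (k + 1) (by omega)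
    · rw [hao]
      omega

theorem thueMorse_add_two_pow (hae : ∀ k, a (2 * k) = a k)
    (hao : ∀ k, a (2 * k + 1) = 1 - a k) (k : ℕ) : ∀ n < 2 ^ k, a (n + 2 ^ k) = 1 - a n := by
  induction k with
  | zero =>
    intro n hn
    obtain rfl : n = 0 := by omega
    exact hao 0
  | succ k ih =>
    intro n hn
    obtain ⟨j, rfl | rfl⟩ := Nat.even_or_odd' n
    · rw [show 2 * j + 2 ^ (k + 1) = 2 * (j + 2 ^ k) by ring, hae, hae, ih j (by omega)]
    · rw [show 2 * j + 1 + 2 ^ (k + 1) = 2 * (j + 2 ^ k) + 1 by ring, hao, hao,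
        ih j (by omega)]

theorem neg_one_pow_thueMorse_add_two_pow {R : Type*} [Ring R] (ha0 : a 0 = 0)
    (hae : ∀ k, a (2 * k) = a k) (hao : ∀ k, a (2 * k + 1) = 1 - a k) (k : ℕ) :
    ∀ n < 2 ^ k, (-1 : R) ^ a (n + 2 ^ k) = -(-1) ^ a n := by
  intro n hn
  rw [thueMorse_add_two_pow hae hao k n hn]
  rcases Nat.le_one_iff_eq_zero_or_eq_one.mp (thueMorse_le_one_s17 ha0 hae hao n) with h | h <;>
    simp [h]

end ThueMorse

/-- (Vanishing of the cross-channel Taylor coefficients `B_m`, equations (56)–(58))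
With `(a_n)` the PTM sequence and `N = 2^{M+1}`, and `S_{V,n}`, `S_{H,n}` the pointwise
evaluations of the PTM-A transmit matrix entries (split by parity of `n`): for every
`0 ≤ m ≤ M`,
`Σ_{n<N} n^m S_{V,n} conj(S_{H,n}) = (Σ_{n<N} (-1)^{a_n} n^m) X conj(Y) = 0`. -/
theorem stmt17 (M : ℕ) (a : ℕ → ℕ) (ha0 : a 0 = 0)
    (hae : ∀ k, a (2 * k) = a k) (hao : ∀ k, a (2 * k + 1) = 1 - a k)
    (X Y : ℂ) (SV SH : ℕ → ℂ)
    (hSVe : ∀ n, n % 2 = 0 →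
      SV n = (1 - (a n : ℂ)) * X + (a n : ℂ) * (-(starRingEnd ℂ) Y))
    (hSHe : ∀ n, n % 2 = 0 →
      SH n = (1 - (a n : ℂ)) * Y + (a n : ℂ) * ((starRingEnd ℂ) X))
    (hSVo : ∀ n, n % 2 = 1 →
      SV n = (a n : ℂ) * (-(starRingEnd ℂ) Y) + (1 - (a n : ℂ)) * (-X))
    (hSHo : ∀ n, n % 2 = 1 →
      SH n = (a n : ℂ) * ((starRingEnd ℂ) X) + (1 - (a n : ℂ)) * (-Y)) :
    ∀ m ≤ M,
      (∑ n ∈ Finset.range (2 ^ (M + 1)), (n : ℂ) ^ m * (SV n * (starRingEnd ℂ) (SH n))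
        = ((∑ n ∈ Finset.range (2 ^ (M + 1)), (-1 : ℤ) ^ (a n) * (n : ℤ) ^ m : ℤ) : ℂ)
            * (X * (starRingEnd ℂ) Y)) ∧
      (∑ n ∈ Finset.range (2 ^ (M + 1)), (n : ℂ) ^ m * (SV n * (starRingEnd ℂ) (SH n))
        = 0) := by
  intro m hm
  have hterm (n : ℕ) : SV n * starRingEnd ℂ (SH n) = (-1) ^ a n * (X * starRingEnd ℂ Y) := by
    rcases Nat.mod_two_eq_zero_or_one n with hn | hn <;>
      rcases Nat.le_one_iff_eq_zero_or_eq_one.mp (thueMorse_le_one_s17 ha0 hae hao n) with h | h <;>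
      simp [hSVe, hSHe, hSVo, hSHo, hn, h] <;> ring
  have hprouhet : ∑ n ∈ range (2 ^ (M + 1)), (-1 : ℤ) ^ a n * (n : ℤ) ^ m = 0 := by
    simpa using sum_range_two_pow_mul_eval_eq_zero (fun n => (-1 : ℤ) ^ a n)
      (neg_one_pow_thueMorse_add_two_pow ha0 hae hao) (p := Polynomial.X ^ m)
      (by rw [degree_X_pow]; exact_mod_cast Nat.lt_succ_of_le hm)
  have hsum : ∑ n ∈ range (2 ^ (M + 1)), (n : ℂ) ^ m * (SV n * starRingEnd ℂ (SH n))
      = ((∑ n ∈ range (2 ^ (M + 1)), (-1 : ℤ) ^ a n * (n : ℤ) ^ m : ℤ) : ℂ)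
          * (X * starRingEnd ℂ Y) := by
    push_cast
    rw [sum_mul]
    exact sum_congr rfl fun n _ => by rw [hterm n]; ring
  exact ⟨hsum, by rw [hsum, hprouhet, Int.cast_zero, zero_mul]⟩
end
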